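/- Let f : ℝ → ℝ be twice differentiable, and let p, μ, λ̃ : ℝ → ℝ be differentiable functions satisfying λ̃′(t) = −p(t)·μ′(t) for all t ∈ ℝ. Define F : ℝ² → ℝ⁴ by F(s,t) = (s, f′(s)·λ̃(t), f(s)·p(t), μ(t)). Then for every (s,t) ∈ ℝ², the partial derivative vectors u = ∂F/∂s(s,t) = (1, f″(s)λ̃(t), f′(s)p(t), 0) and v = ∂F/∂t(s,t) = (0, f′(s)λ̃′(t), f(s)p′(t), μ′(t)) satisfy ω₀(u,v) = 0, where ω₀ is the standard symplectic pairing on ℝ⁴ given by ω₀(u,v) = u₁v₂ − u₂v₁ + u₃v₄ − u₄v₃. In other words, the parameterized surface F is Lagrangian for the standard symplectic form dp₁∧dq₁ + dp₂∧dq₂. -/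

import Mathlib

/-- The standard symplectic pairing `ω₀(u,v) = u₁v₂ - u₂v₁ + u₃v₄ - u₄v₃`
on `ℝ⁴` with coordinates `(p₁, q₁, p₂, q₂)`. -/
def omega0 (u v : ℝ × ℝ × ℝ × ℝ) : ℝ :=
  u.1 * v.2.1 - u.2.1 * v.1 + u.2.2.1 * v.2.2.2 - u.2.2.2 * v.2.2.1

lemma omega0_one_zero (a b x y z : ℝ) :
    omega0 (1, a, b, 0) (0, x, y, z) = x + b * z := by
  simp only [omega0]
  ring

/-- The parameterized surface `F(s,t) = (s, f'(s)λ̃(t), f(s)p(t), μ(t))` is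
Lagrangian for the standard symplectic form, given the Legendrian condition
`λ̃' = -p μ'`: its partial derivative vectors pair to zero under `ω₀`. -/
theorem stmt_3 (f f' f'' p p' μ μ' lam lam' : ℝ → ℝ)
    (hf : ∀ s, HasDerivAt f (f' s) s) (hf' : ∀ s, HasDerivAt f' (f'' s) s)
    (hp : ∀ t, HasDerivAt p (p' t) t) (hμ : ∀ t, HasDerivAt μ (μ' t) t)
    (hlam : ∀ t, HasDerivAt lam (lam' t) t)
    (hLeg : ∀ t, lam' t = -(p t * μ' t)) :
    ∀ s t : ℝ,
      HasDerivAt (fun s' => ((s', f' s' * lam t, f s' * p t, μ t) : ℝ × ℝ × ℝ × ℝ))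
        ((1 : ℝ), f'' s * lam t, f' s * p t, (0 : ℝ)) s ∧
      HasDerivAt (fun t' => ((s, f' s * lam t', f s * p t', μ t') : ℝ × ℝ × ℝ × ℝ))
        ((0 : ℝ), f' s * lam' t, f s * p' t, μ' t) t ∧
      omega0 ((1 : ℝ), f'' s * lam t, f' s * p t, (0 : ℝ))
        ((0 : ℝ), f' s * lam' t, f s * p' t, μ' t) = 0 := by
  intro s t
  refine ⟨?_, ?_, ?_⟩
  · exact (hasDerivAt_id s).prodMk <| ((hf' s).mul_const _).prodMk <|
      ((hf s).mul_const _).prodMk (hasDerivAt_const _ _)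
  · exact (hasDerivAt_const _ _).prodMk <| ((hlam t).const_mul _).prodMk <|
      ((hp t).const_mul _).prodMk (hμ t)
  · rw [omega0_one_zero, hLeg]
    ring
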